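/- Let C ⊆ ℝⁿ be nonempty, closed, and convex. Let z*(ε) = argmin_{z ∈ C} zᵀ(I + ε^β M)z with M positive semidefinite and z*(0) = argmin_{z ∈ C} ‖z‖². Then ‖z*(ε) - z*(0)‖² ≤ λ_max(M)·ε^β·‖z*(0)‖², so the minimizer depends continuously on ε with ‖z*(ε) - z*(0)‖ ≤ √(λ_max(M))·ε^{β/2}·‖z*(0)‖ → 0 as ε → 0. -/

import Mathlib

/-!
The min-norm point `z₀` of a convex set `C` satisfies the first-order condition
`⟪z₀, z - z₀⟫ ≥ 0` on `C` (the derivative of `t ↦ ‖z₀ + t (z - z₀)‖²` at `0⁺`), which is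
`‖z₀‖² + ‖z - z₀‖² ≤ ‖z‖²`: strong convexity of `‖·‖²` with modulus `2`. Taking `z = z_ε` and
testing the regularized program against the competitor `z₀`, with `M ⪰ 0`, gives
`‖z_ε - z₀‖² ≤ ‖z_ε‖² - ‖z₀‖² ≤ ε^β z₀ᵀ M z₀ ≤ λ ε^β ‖z₀‖²`.
-/

open Matrix Filter Set Topology

lemma nonneg_of_forall_mem_Ioc_add_mul_nonneg {a b : ℝ} (h : ∀ t ∈ Ioc (0 : ℝ) 1, 0 ≤ a + t * b) :
    0 ≤ a := by
  have hlim : Tendsto (fun t : ℝ => a + t * b) (𝓝[>] 0) (𝓝 a) :=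
    ((continuous_const.add (continuous_id.mul continuous_const)).tendsto' 0 a (by simp)).mono_left
      nhdsWithin_le_nhds
  exact ge_of_tendsto hlim (eventually_of_mem (Ioc_mem_nhdsGT one_pos) h)

section MinNormPoint

variable {ι : Type*} [Fintype ι] {C : Set (ι → ℝ)} {z₀ : ι → ℝ}

theorem dotProduct_sub_nonneg_of_isMinOn (hC : Convex ℝ C) (hz₀ : z₀ ∈ C)
    (hmin : IsMinOn (fun z => z ⬝ᵥ z) C z₀) {z : ι → ℝ} (hz : z ∈ C) :
    0 ≤ z₀ ⬝ᵥ (z - z₀) := by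
  set w := z - z₀
  suffices 0 ≤ 2 * (z₀ ⬝ᵥ w) by linarith
  refine nonneg_of_forall_mem_Ioc_add_mul_nonneg (b := w ⬝ᵥ w) fun t ⟨ht₀, ht₁⟩ => ?_
  have hmem : z₀ + t • w ∈ C := by
    simpa [w, smul_sub, sub_smul, add_comm, add_sub_assoc] using
      hC.add_smul_sub_mem hz₀ hz ⟨ht₀.le, ht₁⟩
  have hexp : (z₀ + t • w) ⬝ᵥ (z₀ + t • w) = z₀ ⬝ᵥ z₀ + t * (2 * (z₀ ⬝ᵥ w) + t * (w ⬝ᵥ w)) := by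
    simp only [add_dotProduct, dotProduct_add, smul_dotProduct, dotProduct_smul, smul_eq_mul,
      dotProduct_comm w z₀]
    ring
  have hle : z₀ ⬝ᵥ z₀ ≤ (z₀ + t • w) ⬝ᵥ (z₀ + t • w) := hmin hmem
  rw [hexp] at hle
  exact nonneg_of_mul_nonneg_right (by linarith) ht₀

theorem dotProduct_self_add_sub_le_of_isMinOn (hC : Convex ℝ C) (hz₀ : z₀ ∈ C)
    (hmin : IsMinOn (fun z => z ⬝ᵥ z) C z₀) {z : ι → ℝ} (hz : z ∈ C) :
    z₀ ⬝ᵥ z₀ + (z - z₀) ⬝ᵥ (z - z₀) ≤ z ⬝ᵥ z := by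
  have hexp : z ⬝ᵥ z = z₀ ⬝ᵥ z₀ + 2 * (z₀ ⬝ᵥ (z - z₀)) + (z - z₀) ⬝ᵥ (z - z₀) := by
    simp only [sub_dotProduct, dotProduct_sub, dotProduct_comm z z₀]
    ring
  linarith [dotProduct_sub_nonneg_of_isMinOn hC hz₀ hmin hz]

end MinNormPoint

theorem dotProduct_one_add_smul_mulVec {ι R : Type*} [Fintype ι] [DecidableEq ι] [CommSemiring R]
    (M : Matrix ι ι R) (e : R) (v : ι → R) :
    v ⬝ᵥ ((1 + e • M) *ᵥ v) = v ⬝ᵥ v + e * (v ⬝ᵥ (M *ᵥ v)) := by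
  rw [add_mulVec, one_mulVec, smul_mulVec, dotProduct_add, dotProduct_smul, smul_eq_mul]

theorem dotProduct_sub_le_of_isMinOn_regularized {ι : Type*} [Fintype ι] [DecidableEq ι]
    {M : Matrix ι ι ℝ} (hM : M.PosSemidef) {e : ℝ} (he : 0 ≤ e) {C : Set (ι → ℝ)}
    (hC : Convex ℝ C) {zₑ z₀ : ι → ℝ} (hzₑ : zₑ ∈ C) (hz₀ : z₀ ∈ C)
    (hminₑ : IsMinOn (fun z => z ⬝ᵥ ((1 + e • M) *ᵥ z)) C zₑ)
    (hmin₀ : IsMinOn (fun z => z ⬝ᵥ z) C z₀) :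
    (zₑ - z₀) ⬝ᵥ (zₑ - z₀) ≤ e * (z₀ ⬝ᵥ (M *ᵥ z₀)) := by
  have hstrong := dotProduct_self_add_sub_le_of_isMinOn hC hz₀ hmin₀ hzₑ
  have hopt : zₑ ⬝ᵥ ((1 + e • M) *ᵥ zₑ) ≤ z₀ ⬝ᵥ ((1 + e • M) *ᵥ z₀) := hminₑ hz₀
  rw [dotProduct_one_add_smul_mulVec, dotProduct_one_add_smul_mulVec] at hopt
  have hMzₑ : 0 ≤ zₑ ⬝ᵥ (M *ᵥ zₑ) := by simpa using hM.dotProduct_mulVec_nonneg zₑ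
  nlinarith [mul_nonneg he hMzₑ]

theorem Real.sqrt_rpow_eq_rpow_div_two {x : ℝ} (hx : 0 ≤ x) (y : ℝ) : √(x ^ y) = x ^ (y / 2) := by
  rw [Real.sqrt_eq_rpow, ← Real.rpow_mul hx, mul_one_div]

theorem stmt_10_general {n : ℕ} (M : Matrix (Fin n) (Fin n) ℝ) (hM : M.PosSemidef)
    (C : Set (Fin n → ℝ)) (hconv : Convex ℝ C)
    (lM : ℝ) (hlM : 0 ≤ lM) (hlMmax : ∀ x : Fin n → ℝ, x ⬝ᵥ (M *ᵥ x) ≤ lM * (x ⬝ᵥ x))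
    (β ε : ℝ) (hε : 0 ≤ ε)
    (zε z0 : Fin n → ℝ) (hzε : zε ∈ C) (hz0 : z0 ∈ C)
    (hminε : ∀ z ∈ C, zε ⬝ᵥ ((1 + ε ^ β • M) *ᵥ zε) ≤ z ⬝ᵥ ((1 + ε ^ β • M) *ᵥ z))
    (hmin0 : ∀ z ∈ C, z0 ⬝ᵥ z0 ≤ z ⬝ᵥ z) :
    (zε - z0) ⬝ᵥ (zε - z0) ≤ lM * ε ^ β * (z0 ⬝ᵥ z0) ∧
    Real.sqrt ((zε - z0) ⬝ᵥ (zε - z0)) ≤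
      Real.sqrt lM * ε ^ (β / 2) * Real.sqrt (z0 ⬝ᵥ z0) := by
  have he : 0 ≤ ε ^ β := Real.rpow_nonneg hε β
  have hbound : (zε - z0) ⬝ᵥ (zε - z0) ≤ lM * ε ^ β * (z0 ⬝ᵥ z0) :=
    calc (zε - z0) ⬝ᵥ (zε - z0) ≤ ε ^ β * (z0 ⬝ᵥ (M *ᵥ z0)) :=
          dotProduct_sub_le_of_isMinOn_regularized hM he hconv hzε hz0 hminε hmin0
      _ ≤ ε ^ β * (lM * (z0 ⬝ᵥ z0)) := mul_le_mul_of_nonneg_left (hlMmax z0) he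
      _ = lM * ε ^ β * (z0 ⬝ᵥ z0) := by ring
  refine ⟨hbound, ?_⟩
  have hz0z0 : 0 ≤ z0 ⬝ᵥ z0 := Finset.sum_nonneg fun i _ => mul_self_nonneg (z0 i)
  calc Real.sqrt ((zε - z0) ⬝ᵥ (zε - z0)) ≤ Real.sqrt (lM * ε ^ β * (z0 ⬝ᵥ z0)) :=
        Real.sqrt_le_sqrt hbound
    _ = Real.sqrt lM * ε ^ (β / 2) * Real.sqrt (z0 ⬝ᵥ z0) := by
        rw [Real.sqrt_mul' _ hz0z0, Real.sqrt_mul hlM, Real.sqrt_rpow_eq_rpow_div_two hε]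

/-- Continuity of the regularized quadratic program's minimizer in the regularization weight. -/
theorem stmt_10 {n : ℕ} (M : Matrix (Fin n) (Fin n) ℝ) (hM : M.PosSemidef)
    (C : Set (Fin n → ℝ)) (hne : C.Nonempty) (hcl : IsClosed C) (hconv : Convex ℝ C)
    (lM : ℝ) (hlM : 0 ≤ lM) (hlMmax : ∀ x : Fin n → ℝ, x ⬝ᵥ (M *ᵥ x) ≤ lM * (x ⬝ᵥ x))
    (β ε : ℝ) (hβ : 0 < β) (hε : 0 ≤ ε)
    (zε z0 : Fin n → ℝ) (hzε : zε ∈ C) (hz0 : z0 ∈ C)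
    (hminε : ∀ z ∈ C, zε ⬝ᵥ ((1 + ε ^ β • M) *ᵥ zε) ≤ z ⬝ᵥ ((1 + ε ^ β • M) *ᵥ z))
    (hmin0 : ∀ z ∈ C, z0 ⬝ᵥ z0 ≤ z ⬝ᵥ z) :
    (zε - z0) ⬝ᵥ (zε - z0) ≤ lM * ε ^ β * (z0 ⬝ᵥ z0) ∧
    Real.sqrt ((zε - z0) ⬝ᵥ (zε - z0)) ≤
      Real.sqrt lM * ε ^ (β / 2) * Real.sqrt (z0 ⬝ᵥ z0) :=
  stmt_10_general M hM C hconv lM hlM hlMmax β ε hε zε z0 hzε hz0 hminε hmin0
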